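/- Let C ⊆ (F_{q^r})^n be a Galois supplemented cyclic code. Then ψ(C) equals the set of all vectors in (F_{q^r})^n each of whose coordinates has zero trace over F_q; in particular ψ(C) is an F_q-subspace of dimension (r−1)n. -/

import Mathlib

/-!
The map `ψ x = x ^ q - x` has kernel `F_q` and its image lies in the trace-zero set, a root set
of size at most `q ^ (r - 1)`; counting gives that `ψ(F)` is exactly the trace-zero set. So it
suffices that `C + F_q ^ n = F ^ n`. For `C = (g)`, being Galois supplemented makes `g` coprime
to its conjugates `g^(σ^i)`, `0 < i < r`; hence a polynomial over `F_q` divisible by `g` is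
divisible by their product, of degree `r · deg g`. Reduction mod `g` is therefore injective on
`F_q`-polynomials of degree `< r · deg g`, and as both sides have `q ^ (r · deg g)` elements it is
onto: every word is a codeword plus a word over `F_q`.
-/

open Polynomial

/-- The polynomial of degree `< n` whose coefficient vector is the word `u`. -/
noncomputable def wordPoly {F : Type*} [Field F] {n : ℕ} (u : Fin n → F) : Polynomial F :=
  ∑ j : Fin n, Polynomial.C (u j) * Polynomial.X ^ (j : ℕ)

/-- `C ⊆ (F_{q^r})^n` is Galois supplemented: `C + C^τ = (F_{q^r})^n` for every non-trivial
`τ ∈ Gal(F_{q^r}/F_q)`; the non-trivial automorphisms are `x ↦ x^(q^i)`, `1 ≤ i < r`. -/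
def GaloisSupplemented {F : Type*} [Field F] {n : ℕ} (q r : ℕ) (C : Set (Fin n → F)) : Prop :=
  ∀ i : ℕ, 0 < i → i < r → ∀ v : Fin n → F,
    ∃ a ∈ C, ∃ b ∈ C, v = a + fun j => (b j) ^ (q ^ i)

section Word

variable {F : Type*} [Field F] {n : ℕ}

theorem wordPoly_eq_degreeLTEquiv_symm (u : Fin n → F) :
    wordPoly u = ((degreeLTEquiv F n).symm u : F[X]) := by
  simp [wordPoly, degreeLTEquiv, C_mul_X_pow_eq_monomial]

theorem coeff_wordPoly (u : Fin n → F) (j : Fin n) : (wordPoly u).coeff j = u j := by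
  rw [wordPoly_eq_degreeLTEquiv_symm]
  exact congr_fun ((degreeLTEquiv F n).apply_symm_apply u) j

theorem wordPoly_add (u v : Fin n → F) : wordPoly (u + v) = wordPoly u + wordPoly v := by
  simp only [wordPoly_eq_degreeLTEquiv_symm, map_add, Submodule.coe_add]

theorem wordPoly_sub (u v : Fin n → F) : wordPoly (u - v) = wordPoly u - wordPoly v := by
  simp only [wordPoly_eq_degreeLTEquiv_symm, map_sub, Submodule.coe_sub]

theorem exists_wordPoly_eq {P : F[X]} (hP : P.degree < n) : ∃ u : Fin n → F, wordPoly u = P :=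
  ⟨degreeLTEquiv F n ⟨P, mem_degreeLT.2 hP⟩, by
    rw [wordPoly_eq_degreeLTEquiv_symm, LinearEquiv.symm_apply_apply]⟩

theorem wordPoly_map {K : Type*} [Field K] (φ : F →+* K) (u : Fin n → F) :
    wordPoly (fun j => φ (u j)) = (wordPoly u).map φ := by
  simp [wordPoly, Polynomial.map_sum]

end Word

theorem ncard_setOf_forall {α : Type*} {n : ℕ} (p : α → Prop) :
    {v : Fin n → α | ∀ j, p (v j)}.ncard = {x | p x}.ncard ^ n := by
  rw [← Nat.card_coe_set_eq, ← Nat.card_coe_set_eq]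
  exact (Nat.card_congr (Equiv.subtypePiEquivPi (β := fun _ : Fin n => α) (p := fun _ => p))).trans
    (by rw [Nat.card_fun, Nat.card_fin]; rfl)

section Frobenius

variable {F : Type*} [Field F] {q r : ℕ}

theorem exists_ringHom_eq_pow [Fintype F] (hr : r ≠ 0) (hF : Fintype.card F = q ^ r) :
    ∃ σ : F →+* F, ∀ x, σ x = x ^ q := by
  obtain ⟨m, hp, hcard⟩ := FiniteField.card F (ringChar F)
  have := Fact.mk hp
  obtain ⟨k, -, rfl⟩ := (Nat.dvd_prime_pow hp).1 (hcard ▸ hF ▸ dvd_pow_self q hr)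
  exact ⟨iterateFrobenius F (ringChar F) k, iterateFrobenius_def _ _⟩

theorem one_lt_of_card_eq_pow [Fintype F] (hF : Fintype.card F = q ^ r) : 1 < q := by
  have := hF ▸ Fintype.one_lt_card (α := F)
  by_contra! hq
  exact this.not_ge (pow_le_one₀ q.zero_le hq)

theorem pow_apply_eq_pow_pow {σ : F →+* F} (hσ : ∀ x, σ x = x ^ q) (i : ℕ) (x : F) :
    (σ ^ i) x = x ^ q ^ i := by
  induction i generalizing x with
  | zero => simp
  | succ i ih => rw [pow_succ, RingHom.mul_def, RingHom.comp_apply, hσ, ih, ← pow_mul, ← pow_succ']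

theorem sum_pow_pow_sub_self_eq_zero [Fintype F] {σ : F →+* F} (hσ : ∀ x, σ x = x ^ q)
    (hF : Fintype.card F = q ^ r) (x : F) : ∑ i ∈ Finset.range r, (x ^ q - x) ^ q ^ i = 0 := by
  have hstep (i : ℕ) : (x ^ q - x) ^ q ^ i = x ^ q ^ (i + 1) - x ^ q ^ i := by
    rw [← pow_apply_eq_pow_pow hσ, map_sub, pow_apply_eq_pow_pow hσ, pow_apply_eq_pow_pow hσ,
      ← pow_mul, ← pow_succ']
  rw [Finset.sum_congr rfl fun i _ => hstep i, Finset.sum_range_sub (fun i => x ^ q ^ i), ← hF,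
    FiniteField.pow_card, pow_zero, pow_one, sub_self]

theorem ncard_setOf_eval_eq_zero_le {P : F[X]} (hP : P ≠ 0) :
    {x | P.eval x = 0}.ncard ≤ P.natDegree :=
  (Set.ncard_le_ncard (fun x hx => mem_rootSet.2 ⟨hP, by simpa using hx⟩) (Set.toFinite _)).trans
    (P.ncard_rootSet_le F)

theorem ncard_setOf_pow_eq_self_le (hq : 1 < q) : {x : F | x ^ q = x}.ncard ≤ q := by
  have := ncard_setOf_eval_eq_zero_le (FiniteField.X_pow_card_sub_X_ne_zero F hq)
  simpa [FiniteField.X_pow_card_sub_X_natDegree_eq F hq, sub_eq_zero] using this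

theorem ncard_setOf_sum_pow_pow_eq_zero_le (hq : 1 < q) (hr : r ≠ 0) :
    {x : F | ∑ i ∈ Finset.range r, x ^ q ^ i = 0}.ncard ≤ q ^ (r - 1) := by
  obtain ⟨s, rfl⟩ := Nat.exists_eq_succ_of_ne_zero hr
  set P : F[X] := ∑ i ∈ Finset.range (s + 1), X ^ q ^ i
  have hPcoeff : P.coeff (q ^ s) = 1 := by
    rw [finsetSum_coeff, Finset.sum_eq_single_of_mem s (by simp) fun i _ hi => ?_]
    · simp
    · simp [coeff_X_pow, (Nat.pow_right_injective hq).ne hi.symm]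
  have hPdeg : P.natDegree ≤ q ^ s := natDegree_sum_le_of_forall_le _ _ fun i hi => by
    simpa using Nat.pow_le_pow_right (by omega) (Nat.lt_succ_iff.1 (Finset.mem_range.1 hi))
  have hP0 : P ≠ 0 := fun h => by simp [h] at hPcoeff
  simpa [P, eval_finsetSum] using (ncard_setOf_eval_eq_zero_le hP0).trans hPdeg

end Frobenius

section TraceZero

variable {F : Type*} [Field F] [Fintype F] {q r : ℕ} {σ : F →+* F}

theorem ncard_range_pow_sub_self_mul_ncard_setOf_pow_eq_self (hσ : ∀ x, σ x = x ^ q) :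
    (Set.range fun x : F => x ^ q - x).ncard * {x : F | x ^ q = x}.ncard = Fintype.card F := by
  let ψ : F →+ F := σ.toAddMonoidHom - AddMonoidHom.id F
  have hψ (x : F) : ψ x = x ^ q - x := by simp [ψ, hσ]
  have hrange : (Set.range fun x : F => x ^ q - x) = ψ.range := by ext; simp [hψ]
  have hker : {x : F | x ^ q = x} = ψ.ker := by ext; simp [hψ, sub_eq_zero]
  rw [hrange, hker, ← Nat.card_eq_fintype_card, ← Nat.card_coe_set_eq, ← Nat.card_coe_set_eq,
    SetLike.coe_sort_coe, SetLike.coe_sort_coe, ← AddSubgroup.index_ker, mul_comm]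
  exact ψ.ker.card_mul_index

theorem pow_pred_le_ncard_range_pow_sub_self (hσ : ∀ x, σ x = x ^ q)
    (hF : Fintype.card F = q ^ r) (hq : 1 < q) (hr : r ≠ 0) :
    q ^ (r - 1) ≤ (Set.range fun x : F => x ^ q - x).ncard := by
  refine Nat.le_of_mul_le_mul_right ?_ (by omega : 0 < q)
  calc q ^ (r - 1) * q = Fintype.card F := by rw [← pow_succ, Nat.sub_add_cancel (by omega), hF]
    _ = _ := (ncard_range_pow_sub_self_mul_ncard_setOf_pow_eq_self hσ).symm
    _ ≤ _ := Nat.mul_le_mul_left _ (ncard_setOf_pow_eq_self_le hq)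

theorem range_pow_sub_self_eq (hσ : ∀ x, σ x = x ^ q) (hF : Fintype.card F = q ^ r)
    (hq : 1 < q) (hr : r ≠ 0) :
    (Set.range fun x : F => x ^ q - x) = {x | ∑ i ∈ Finset.range r, x ^ q ^ i = 0} :=
  Set.eq_of_subset_of_ncard_le (Set.range_subset_iff.2 (sum_pow_pow_sub_self_eq_zero hσ hF))
    ((ncard_setOf_sum_pow_pow_eq_zero_le hq hr).trans
      (pow_pred_le_ncard_range_pow_sub_self hσ hF hq hr))

theorem ncard_setOf_sum_pow_pow_eq_zero (hσ : ∀ x, σ x = x ^ q) (hF : Fintype.card F = q ^ r)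
    (hq : 1 < q) (hr : r ≠ 0) :
    {x : F | ∑ i ∈ Finset.range r, x ^ q ^ i = 0}.ncard = q ^ (r - 1) :=
  (ncard_setOf_sum_pow_pow_eq_zero_le hq hr).antisymm
    (range_pow_sub_self_eq hσ hF hq hr ▸ pow_pred_le_ncard_range_pow_sub_self hσ hF hq hr)

theorem ncard_setOf_pow_eq_self (hσ : ∀ x, σ x = x ^ q) (hF : Fintype.card F = q ^ r)
    (hq : 1 < q) (hr : r ≠ 0) : {x : F | x ^ q = x}.ncard = q := by
  have h := ncard_range_pow_sub_self_mul_ncard_setOf_pow_eq_self hσ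
  rw [range_pow_sub_self_eq hσ hF hq hr, ncard_setOf_sum_pow_pow_eq_zero hσ hF hq hr, hF,
    ← Nat.sub_add_cancel (Nat.one_le_iff_ne_zero.2 hr), pow_succ, Nat.add_sub_cancel] at h
  exact Nat.eq_of_mul_eq_mul_left (by positivity) h

end TraceZero

section Descent

variable {K : Type*} [Field K] (φ : K →+* K) {g : K[X]} {r : ℕ}

theorem map_pow_eq_self {A : K[X]} (hA : A.map φ = A) (i : ℕ) : A.map (φ ^ i) = A := by
  induction i with
  | zero => rw [pow_zero, RingHom.one_def, map_id]
  | succ i ih => rw [pow_succ, RingHom.mul_def, ← map_map, hA, ih]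

theorem isCoprime_map_pow_of_lt (hcop : ∀ i, 0 < i → i < r → IsCoprime g (g.map (φ ^ i)))
    {i j : ℕ} (hij : i < j) (hj : j < r) : IsCoprime (g.map (φ ^ i)) (g.map (φ ^ j)) := by
  have hconj : (g.map (φ ^ (j - i))).map (φ ^ i) = g.map (φ ^ j) := by
    rw [map_map, ← RingHom.mul_def, ← pow_add, Nat.add_sub_cancel' hij.le]
  have := (hcop (j - i) (Nat.sub_pos_of_lt hij) (lt_of_le_of_lt (Nat.sub_le j i) hj)).map
    (mapRingHom (φ ^ i))
  rwa [coe_mapRingHom, hconj] at this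

theorem prod_map_pow_dvd (hcop : ∀ i, 0 < i → i < r → IsCoprime g (g.map (φ ^ i)))
    {A : K[X]} (hA : A.map φ = A) (hgA : g ∣ A) : ∏ i ∈ Finset.range r, g.map (φ ^ i) ∣ A := by
  refine Finset.prod_dvd_of_coprime (fun i hi j hj hij => ?_) fun i _ => ?_
  · simp only [Finset.coe_range, Set.mem_Iio] at hi hj
    rcases hij.lt_or_gt with h | h
    · exact isCoprime_map_pow_of_lt φ hcop h hj
    · exact (isCoprime_map_pow_of_lt φ hcop h hi).symm
  · have := map_dvd (φ ^ i) hgA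
    rwa [map_pow_eq_self φ hA i] at this

theorem natDegree_prod_map_pow (hg : g.Monic) :
    (∏ i ∈ Finset.range r, g.map (φ ^ i)).natDegree = r * g.natDegree := by
  simp [natDegree_prod_of_monic _ _ fun i _ => hg.map (φ ^ i)]

theorem mul_natDegree_le_of_dvd_X_pow_sub_one {n : ℕ} (hn : 0 < n) (hg : g.Monic)
    (hcop : ∀ i, 0 < i → i < r → IsCoprime g (g.map (φ ^ i))) (hdvd : g ∣ X ^ n - 1) :
    r * g.natDegree ≤ n := by
  have hfix : (X ^ n - 1 : K[X]).map φ = X ^ n - 1 := by simp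
  have := natDegree_le_of_dvd (prod_map_pow_dvd φ hcop hfix hdvd) (X_pow_sub_C_ne_zero hn 1)
  rwa [natDegree_prod_map_pow φ hg, ← C_1, natDegree_X_pow_sub_C] at this

theorem card_degreeLT (m : ℕ) : Nat.card (degreeLT K m) = Nat.card K ^ m := by
  rw [Nat.card_congr (degreeLTEquiv K m).toEquiv, Nat.card_fun, Nat.card_fin]

theorem card_degreeLT_map_eq_self (m : ℕ) :
    Nat.card {A : degreeLT K m // (A : K[X]).map φ = A} = {x | φ x = x}.ncard ^ m := by
  refine (Nat.card_congr ((Equiv.subtypeEquiv (degreeLTEquiv K m).toEquiv fun A => ?_).trans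
    (Equiv.subtypePiEquivPi (p := fun _ x => φ x = x)))).trans ?_
  · obtain ⟨A, hA⟩ := A
    simp only [LinearEquiv.coe_toEquiv, degreeLTEquiv, LinearEquiv.coe_mk, LinearMap.coe_mk,
      AddHom.coe_mk]
    refine ⟨fun h j => by simpa using congr_arg (coeff · j) h, fun h => ext fun k => ?_⟩
    rw [coeff_map]
    by_cases hk : k < m
    · exact h ⟨k, hk⟩
    · rw [coeff_eq_zero_of_degree_lt ((mem_degreeLT.1 hA).trans_le (by exact_mod_cast not_lt.1 hk)),
        map_zero]
  · rw [Nat.card_fun, Nat.card_fin]; rfl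

theorem exists_map_eq_self_dvd_sub [Finite K] (hg : g.Monic)
    (hcop : ∀ i, 0 < i → i < r → IsCoprime g (g.map (φ ^ i)))
    (hcard : Nat.card K = {x | φ x = x}.ncard ^ r) (P : K[X]) :
    ∃ A : K[X], A.degree < ↑(r * g.natDegree) ∧ A.map φ = A ∧ g ∣ P - A := by
  have hdvd_sub {A B : K[X]} : g ∣ A - B ↔ A %ₘ g = B %ₘ g := by
    rw [← modByMonic_eq_zero_iff_dvd hg, sub_modByMonic, sub_eq_zero]
  have hmod (P : K[X]) : P %ₘ g ∈ degreeLT K g.natDegree :=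
    mem_degreeLT.2 (degree_eq_natDegree hg.ne_zero ▸ degree_modByMonic_lt _ hg)
  let reduce (A : {A : degreeLT K (r * g.natDegree) // (A : K[X]).map φ = A}) :
      degreeLT K g.natDegree :=
    ⟨A.1 %ₘ g, hmod A.1⟩
  have hinj : Function.Injective reduce := by
    rintro ⟨⟨A, hA⟩, hAφ⟩ ⟨⟨B, hB⟩, hBφ⟩ hAB
    have hG := prod_map_pow_dvd φ hcop (by rw [Polynomial.map_sub, hAφ, hBφ])
      (hdvd_sub.2 (congr_arg Subtype.val hAB))
    have hdeg : (A - B).degree < (∏ i ∈ Finset.range r, g.map (φ ^ i)).degree := by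
      rw [degree_eq_natDegree (monic_prod_of_monic _ _ fun i _ => hg.map (φ ^ i)).ne_zero,
        natDegree_prod_map_pow φ hg]
      exact mem_degreeLT.1 (sub_mem hA hB)
    obtain rfl : A = B := sub_eq_zero.1 (eq_zero_of_dvd_of_degree_lt hG hdeg)
    rfl
  have hle : Nat.card (degreeLT K g.natDegree) ≤
      Nat.card {A : degreeLT K (r * g.natDegree) // (A : K[X]).map φ = A} := by
    rw [card_degreeLT, card_degreeLT_map_eq_self, hcard, pow_mul]
  have : Finite (degreeLT K g.natDegree) := .of_equiv _ (degreeLTEquiv K _).toEquiv.symm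
  obtain ⟨⟨⟨A, hA⟩, hAφ⟩, hPA⟩ := (hinj.bijective_of_nat_card_le hle).2 ⟨P %ₘ g, hmod P⟩
  exact ⟨A, mem_degreeLT.1 hA, hAφ, hdvd_sub.2 (congr_arg Subtype.val hPA).symm⟩

theorem exists_eq_add_dvd_wordPoly_map_eq_self [Finite K] {n : ℕ} (hn : 0 < n) (hg : g.Monic)
    (hdvd : g ∣ X ^ n - 1) (hcop : ∀ i, 0 < i → i < r → IsCoprime g (g.map (φ ^ i)))
    (hcard : Nat.card K = {x | φ x = x}.ncard ^ r) (v : Fin n → K) :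
    ∃ c a : Fin n → K, g ∣ wordPoly c ∧ (∀ j, φ (a j) = a j) ∧ v = c + a := by
  obtain ⟨A, hAdeg, hAφ, hgA⟩ := exists_map_eq_self_dvd_sub φ hg hcop hcard (wordPoly v)
  obtain ⟨a, rfl⟩ := exists_wordPoly_eq (hAdeg.trans_le
    (by exact_mod_cast mul_natDegree_le_of_dvd_X_pow_sub_one φ hn hg hcop hdvd))
  refine ⟨v - a, a, by rwa [wordPoly_sub], fun j => ?_, (sub_add_cancel v a).symm⟩
  simpa [coeff_wordPoly] using congr_arg (coeff · j) hAφ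

end Descent

theorem isCoprime_map_pow_of_galoisSupplemented {F : Type*} [Field F] {q r n : ℕ} (hn : 0 < n)
    {σ : F →+* F} (hσ : ∀ x, σ x = x ^ q) {g : F[X]}
    (hsupp : GaloisSupplemented q r {u : Fin n → F | g ∣ wordPoly u}) {i : ℕ} (hi : 0 < i)
    (hir : i < r) : IsCoprime g (g.map (σ ^ i)) := by
  obtain ⟨e, he⟩ := exists_wordPoly_eq (n := n) (P := (1 : F[X])) (by simpa using hn)
  obtain ⟨a, ⟨A, hA⟩, b, hb, rfl⟩ := hsupp i hi hir e
  obtain ⟨B, hB⟩ := map_dvd (σ ^ i) hb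
  refine ⟨A, B, ?_⟩
  simp_rw [← pow_apply_eq_pow_pow hσ, wordPoly_add, wordPoly_map] at he
  rw [mul_comm A, mul_comm B, ← hA, ← hB, he]

theorem stmt4_general (q r n : ℕ) (hr : 1 < r) (hn : 0 < n)
    (F : Type*) [Field F] [Fintype F] (hF : Fintype.card F = q ^ r)
    (g : Polynomial F) (hmonic : g.Monic) (hdvd : g ∣ (Polynomial.X ^ n - 1))
    (hsupp : GaloisSupplemented q r {u : Fin n → F | g ∣ wordPoly u}) :
    {v : Fin n → F | ∃ u : Fin n → F, g ∣ wordPoly u ∧ v = fun j => (u j) ^ q - u j} =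
      {v : Fin n → F | ∀ j, ∑ i ∈ Finset.range r, (v j) ^ (q ^ i) = 0} ∧
    {v : Fin n → F | ∃ u : Fin n → F, g ∣ wordPoly u ∧
        v = fun j => (u j) ^ q - u j}.ncard = q ^ ((r - 1) * n) := by
  have hr0 : r ≠ 0 := by omega
  obtain ⟨σ, hσ⟩ := exists_ringHom_eq_pow hr0 hF
  have hq : 1 < q := one_lt_of_card_eq_pow hF
  have hcard : Nat.card F = {x | σ x = x}.ncard ^ r := by
    simp only [hσ, ncard_setOf_pow_eq_self hσ hF hq hr0, Nat.card_eq_fintype_card, hF]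
  have himage : {v : Fin n → F | ∃ u, g ∣ wordPoly u ∧ v = fun j => u j ^ q - u j} =
      {v | ∀ j, ∑ i ∈ Finset.range r, v j ^ q ^ i = 0} := by
    ext v
    refine ⟨fun ⟨u, _, hv⟩ j => hv ▸ sum_pow_pow_sub_self_eq_zero hσ hF (u j), fun hv => ?_⟩
    have hrange (j : Fin n) : v j ∈ Set.range fun x : F => x ^ q - x := by
      rw [range_pow_sub_self_eq hσ hF hq hr0]
      exact hv j
    choose w hw using hrange
    obtain ⟨c, a, hc, ha, rfl⟩ := exists_eq_add_dvd_wordPoly_map_eq_self σ hn hmonic hdvd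
      (fun i hi hir => isCoprime_map_pow_of_galoisSupplemented hn hσ hsupp hi hir) hcard w
    refine ⟨c, hc, funext fun j => ?_⟩
    simp only [← hw j, Pi.add_apply, ← hσ, map_add, ha]
    ring
  refine ⟨himage, ?_⟩
  rw [himage, ncard_setOf_forall (fun x : F => ∑ i ∈ Finset.range r, x ^ q ^ i = 0),
    ncard_setOf_sum_pow_pow_eq_zero hσ hF hq hr0, pow_mul]

/-- if `C ⊆ (F_{q^r})^n` is a Galois supplemented cyclic code then
`ψ(C)` (where `ψ(u) = u^σ − u`, `σ : x ↦ x^q` the Frobenius of `F_{q^r}/F_q`) equals the set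
of all words each of whose coordinates has zero trace over `F_q` (the trace being
`x ↦ x + x^q + ⋯ + x^(q^(r−1))`); in particular `ψ(C)` is an `F_q`-subspace of dimension
`(r−1)n`, i.e. it has exactly `q^((r−1)·n)` elements. -/
theorem stmt4 (q r n : ℕ) (hq : IsPrimePow q) (hr : 1 < r) (hn : 0 < n)
    (hcop : Nat.Coprime n q)
    (F : Type*) [Field F] [Fintype F] (hF : Fintype.card F = q ^ r)
    (g : Polynomial F) (hmonic : g.Monic) (hdvd : g ∣ (Polynomial.X ^ n - 1))
    (hsupp : GaloisSupplemented q r {u : Fin n → F | g ∣ wordPoly u}) :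
    {v : Fin n → F | ∃ u : Fin n → F, g ∣ wordPoly u ∧ v = fun j => (u j) ^ q - u j} =
      {v : Fin n → F | ∀ j, ∑ i ∈ Finset.range r, (v j) ^ (q ^ i) = 0} ∧
    {v : Fin n → F | ∃ u : Fin n → F, g ∣ wordPoly u ∧
        v = fun j => (u j) ^ q - u j}.ncard = q ^ ((r - 1) * n) :=
  stmt4_general q r n hr hn F hF g hmonic hdvd hsupp
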